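/- Consider two coupled AdamW optimizers on a differentiable scale-invariant loss L (i.e. ∇L(w/c) = c·∇L(w) for c > 0), with hyperparameters (η_t, λ, ε) and (η_t' = η_t/c, λ' = c·λ, ε' = c·ε), with momentum constants β₁, β₂ ∈ (0,1), states initialized as m_0 = m_0' = 0, v_0 = v_0' = 0, and weights initialized as w_0' = (1/c)·w_0. The AdamW updates are: g_t = ∇L(w_{t-1}); m_t = β₁·m_{t-1} + (1-β₁)·g_t; v_t = β₂·v_{t-1} + (1-β₂)·g_t²; m̂_t = m_t/(1-β₁^t); v̂_t = v_t/(1-β₂^t); w_t = (1 - λ·η_t)·w_{t-1} + η_t·m̂_t/(√v̂_t + ε) (componentwise), and analogously for the primed optimizer. Then for all t: m_t' = c·m_t, v_t' = c²·v_t, and w_t' = (1/c)·w_t. -/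

import Mathlib

theorem adamw_rescaling {n : ℕ}
    (G : (Fin n → ℝ) → (Fin n → ℝ))
    (hG : ∀ c : ℝ, 0 < c → ∀ w, G ((1/c) • w) = c • G w)
    (c : ℝ) (hc : 0 < c)
    (η : ℕ → ℝ) (lam ε : ℝ) (hlam : 0 < lam) (heps : 0 < ε)
    (β₁ β₂ : ℝ) (hβ₁ : β₁ ∈ Set.Ioo (0:ℝ) 1) (hβ₂ : β₂ ∈ Set.Ioo (0:ℝ) 1)
    (w m v w' m' v' : ℕ → (Fin n → ℝ))
    (hm0 : m 0 = 0) (hv0 : v 0 = 0) (hm0' : m' 0 = 0) (hv0' : v' 0 = 0)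
    (hw0' : w' 0 = (1/c) • w 0)
    (hupd : ∀ t : ℕ, 1 ≤ t →
      m t = β₁ • m (t-1) + (1 - β₁) • G (w (t-1)) ∧
      v t = β₂ • v (t-1) + (1 - β₂) • (fun i => (G (w (t-1)) i)^2) ∧
      (∀ i, w t i = (1 - lam * η t) * w (t-1) i +
        η t * ((m t i / (1 - β₁^t)) / (Real.sqrt (v t i / (1 - β₂^t)) + ε))))
    (hupd' : ∀ t : ℕ, 1 ≤ t →
      m' t = β₁ • m' (t-1) + (1 - β₁) • G (w' (t-1)) ∧
      v' t = β₂ • v' (t-1) + (1 - β₂) • (fun i => (G (w' (t-1)) i)^2) ∧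
      (∀ i, w' t i = (1 - (c * lam) * (η t / c)) * w' (t-1) i +
        (η t / c) * ((m' t i / (1 - β₁^t)) / (Real.sqrt (v' t i / (1 - β₂^t)) + c * ε)))) :
    ∀ t : ℕ, m' t = c • m t ∧ v' t = (c^2) • v t ∧ w' t = (1/c) • w t := by
  intro t
  induction t with
  | zero =>
    refine ⟨?_, ?_, hw0'⟩ <;> simp [hm0, hv0, hm0', hv0']
  | succ t ih =>
    obtain ⟨ihm, ihv, ihw⟩ := ih
    obtain ⟨hm, hv, hw⟩ := hupd (t+1) (by omega)
    obtain ⟨hm', hv', hw'⟩ := hupd' (t+1) (by omega)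
    simp only [Nat.add_sub_cancel] at hm hv hw hm' hv' hw'
    have hG' : G (w' t) = c • G (w t) := by rw [ihw, hG c hc]
    have hmeq : m' (t+1) = c • m (t+1) := by
      rw [hm', hm, hG', ihm]
      ext i
      simp only [Pi.add_apply, Pi.smul_apply, smul_eq_mul]
      ring
    have hveq : v' (t+1) = c^2 • v (t+1) := by
      rw [hv', hv, ihv, hG']
      ext i
      simp only [Pi.add_apply, Pi.smul_apply, smul_eq_mul]
      ring
    refine ⟨hmeq, hveq, ?_⟩
    ext i
    rw [hw' i, hmeq, hveq, ihw]
    simp only [Pi.smul_apply, smul_eq_mul]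
    rw [hw i]
    have hsqrt : Real.sqrt (c^2 * v (t+1) i / (1 - β₂^(t+1)))
        = c * Real.sqrt (v (t+1) i / (1 - β₂^(t+1))) := by
      rw [mul_div_assoc, Real.sqrt_mul (sq_nonneg c), Real.sqrt_sq hc.le]
    rw [hsqrt]
    have hd : 0 < Real.sqrt (v (t+1) i / (1 - β₂^(t+1))) + ε := by positivity
    have hb1 : (1:ℝ) - β₁^(t+1) ≠ 0 := by
      have : β₁^(t+1) < 1 := pow_lt_one₀ hβ₁.1.le hβ₁.2 (by omega)
      linarith
    have hcd : c * Real.sqrt (v (t+1) i / (1 - β₂^(t+1))) + c * ε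
        = c * (Real.sqrt (v (t+1) i / (1 - β₂^(t+1))) + ε) := by ring
    rw [hcd]
    field_simp
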